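/- Let α > 0, let H be a set of probability measures and Q a probability measure on Ω, let U be a utility function on [0, 1/α], and let E_α be the set of valid level-α continuous tests for H. For ε* ∈ E_α the following are equivalent: (1) E_Q[U(ε)] − E_Q[U(ε*)] ≤ 0 for all ε ∈ E_α; (2) E_Q[U'(ε*)·(ε − ε*)] ≤ 0 for all ε ∈ E_α, where 0·∞ is understood as 0. -/

import Mathlib

/-!
On `[0, 1/α]` the derivative `D` of `U` is decreasing, so the mean value theorem gives the
gradient inequality `U a ≤ U b + D b · (a - b)` (stated in `ℝ≥0∞` with both sides shifted so that
nothing is subtracted). Integrating it at `b = ε*` shows that the first-order condition implies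
optimality. Conversely, comparing `ε*` with the valid test `ε_t = (1 - t) ε* + t ε` and applying the
gradient inequality at `ε_t` gives `E_Q[D(ε_t) ε] ≤ E_Q[D(ε_t) ε*]` for `0 < t ≤ 1`. As `t → 0`,
Fatou's lemma handles the left side, and dominated convergence the right side, thanks to the uniform
bound `D(ε_t) ε* ≤ D(ε*/2) ε* ≤ 2 U(ε*/2) ≤ 2 U(1/α)` for `t ≤ 1/2`.
-/

open MeasureTheory ENNReal NNReal Set Filter Topology

structure IsUtility (α : ℝ≥0∞) (U D : ℝ≥0∞ → ℝ≥0∞) : Prop where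
  map_zero : U 0 = 0
  monotoneOn : MonotoneOn U (Icc 0 α⁻¹)
  concaveOn : ∀ x ∈ Icc (0 : ℝ≥0∞) α⁻¹, ∀ y ∈ Icc (0 : ℝ≥0∞) α⁻¹,
    ∀ t : ℝ≥0∞, t ≤ 1 → t * U x + (1 - t) * U y ≤ U (t * x + (1 - t) * y)
  continuousOn : ContinuousOn U (Icc 0 α⁻¹)
  finite_of_lt : ∀ x : ℝ≥0∞, x < α⁻¹ → U x ≠ ∞
  deriv_finite : ∀ x : ℝ≥0∞, 0 < x → x < α⁻¹ → D x ≠ ∞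
  hasDerivAt : ∀ x : ℝ, 0 < x → ENNReal.ofReal x < α⁻¹ →
    HasDerivAt (fun t : ℝ => (U (ENNReal.ofReal t)).toReal)
      ((D (ENNReal.ofReal x)).toReal) x
  deriv_continuousOn : ContinuousOn D (Icc 0 α⁻¹)
  deriv_antitoneOn : AntitoneOn D (Icc 0 α⁻¹)

theorem ContinuousOn.measurable_comp {X Y Ω : Type*} [TopologicalSpace X] [MeasurableSpace X]
    [OpensMeasurableSpace X] [TopologicalSpace Y] [MeasurableSpace Y] [BorelSpace Y]
    [MeasurableSpace Ω] {F : X → Y} {s : Set X} (hF : ContinuousOn F s) {g : Ω → X}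
    (hg : Measurable g) (hgs : ∀ ω, g ω ∈ s) : Measurable fun ω => F (g ω) :=
  (continuousOn_iff_continuous_domRestrict.mp hF).measurable.comp (hg.subtype_mk (h := hgs))

namespace ENNReal

theorem one_sub_mul_add_mul_le {a b c t : ℝ≥0∞} (ha : a ≤ c) (hb : b ≤ c) (ht : t ≤ 1) :
    (1 - t) * a + t * b ≤ c :=
  calc (1 - t) * a + t * b ≤ (1 - t) * c + t * c := by gcongr
    _ = c := by rw [← add_mul, tsub_add_cancel_of_le ht, one_mul]

theorem inv_two_mul_le_one_sub_mul_add_mul {a b t : ℝ≥0∞} (ht : t ≤ 2⁻¹) :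
    2⁻¹ * a ≤ (1 - t) * a + t * b :=
  calc 2⁻¹ * a ≤ (1 - t) * a := by
        gcongr
        rw [← ENNReal.one_sub_inv_two]
        exact tsub_le_tsub_left ht 1
    _ ≤ (1 - t) * a + t * b := le_self_add

theorem tendsto_one_sub_mul_add_mul {ι : Type*} {l : Filter ι} {t : ι → ℝ≥0∞}
    (ht : Tendsto t l (𝓝 0)) (a : ℝ≥0∞) {b : ℝ≥0∞} (hb : b ≠ ∞) :
    Tendsto (fun i => (1 - t i) * a + t i * b) l (𝓝 a) := by
  have h1 : Tendsto (fun i => 1 - t i) l (𝓝 1) := by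
    simpa using ENNReal.Tendsto.sub tendsto_const_nhds ht (Or.inl one_ne_top)
  simpa using (ENNReal.Tendsto.mul_const h1 (Or.inl one_ne_zero)).add
    (ENNReal.Tendsto.mul_const ht (Or.inr hb))

theorem exists_eq_add_mul_sub {f f' : ℝ≥0∞ → ℝ≥0∞} {x y : ℝ≥0∞} (hxy : x < y) (hy : y ≠ ∞)
    (hf : ContinuousOn f (Icc x y)) (hf_ne_top : ∀ z ∈ Icc x y, f z ≠ ∞)
    (hf'_ne_top : ∀ z ∈ Ioo x y, f' z ≠ ∞)
    (hderiv : ∀ r ∈ Ioo x.toReal y.toReal,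
      HasDerivAt (fun s : ℝ => (f (ENNReal.ofReal s)).toReal) (f' (ENNReal.ofReal r)).toReal r) :
    ∃ ξ ∈ Ioo x y, f y = f x + f' ξ * (y - x) := by
  have hx : x ≠ ∞ := ne_top_of_lt hxy
  have hxy' : x.toReal < y.toReal := (toReal_lt_toReal hx hy).mpr hxy
  have hIcc : MapsTo ENNReal.ofReal (Icc x.toReal y.toReal) (Icc x y) := fun r hr =>
    ⟨(le_ofReal_iff_toReal_le hx (toReal_nonneg.trans hr.1)).mpr hr.1,
      (ofReal_le_iff_le_toReal hy).mpr hr.2⟩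
  have hIoo : MapsTo ENNReal.ofReal (Ioo x.toReal y.toReal) (Ioo x y) := fun r hr =>
    ⟨(lt_ofReal_iff_toReal_lt hx).mpr hr.1,
      (ofReal_lt_iff_lt_toReal (toReal_nonneg.trans hr.1.le) hy).mpr hr.2⟩
  have hcont : ContinuousOn (fun s : ℝ => (f (ENNReal.ofReal s)).toReal) (Icc x.toReal y.toReal) :=
    continuousOn_toReal.comp (hf.comp continuous_ofReal.continuousOn hIcc)
      fun r hr => hf_ne_top _ (hIcc hr)
  obtain ⟨r, hr, hslope⟩ := exists_hasDerivAt_eq_slope _ _ hxy' hcont hderiv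
  refine ⟨ENNReal.ofReal r, hIoo hr, ?_⟩
  have hfx := hf_ne_top x ⟨le_rfl, hxy.le⟩
  have hf'ξ := hf'_ne_top _ (hIoo hr)
  rw [← toReal_eq_toReal_iff' (hf_ne_top y ⟨hxy.le, le_rfl⟩)
    (add_ne_top.mpr ⟨hfx, mul_ne_top hf'ξ (sub_ne_top hy)⟩), toReal_add hfx
    (mul_ne_top hf'ξ (sub_ne_top hy)), toReal_mul, toReal_sub_of_le hxy.le hy, hslope]
  simp only [ofReal_toReal hx, ofReal_toReal hy]
  field_simp [sub_ne_zero.mpr hxy'.ne']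
  ring

end ENNReal

theorem MeasureTheory.lintegral_one_sub_mul_add_mul_le_one {Ω : Type*} [MeasurableSpace Ω]
    {P : Measure Ω} {f g : Ω → ℝ≥0∞} (hf : Measurable f) {t : ℝ≥0∞} (ht : t ≤ 1)
    (hf1 : ∫⁻ ω, f ω ∂P ≤ 1) (hg1 : ∫⁻ ω, g ω ∂P ≤ 1) :
    ∫⁻ ω, (1 - t) * f ω + t * g ω ∂P ≤ 1 := by
  rw [lintegral_add_left (hf.const_mul _), lintegral_const_mul _ hf,
    lintegral_const_mul' _ _ (ne_top_of_le_ne_top one_ne_top ht)]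
  exact one_sub_mul_add_mul_le hf1 hg1 ht

namespace IsUtility

variable {α : ℝ≥0∞} {U D : ℝ≥0∞ → ℝ≥0∞}

theorem apply_inv_ne_top (hU : IsUtility α U D) (hα : α ≠ 0) : U α⁻¹ ≠ ∞ := by
  rcases eq_or_ne α⁻¹ 0 with h0 | h0
  · rw [h0, hU.map_zero]
    exact zero_ne_top
  have hhalf : 2⁻¹ * α⁻¹ < α⁻¹ := by
    rw [← ENNReal.div_eq_inv_mul]
    exact ENNReal.half_lt_self h0 (inv_ne_top.mpr hα)
  -- concavity between `0` and `α⁻¹` gives `U α⁻¹ / 2 ≤ U (α⁻¹ / 2)`, which is finite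
  have hconc := hU.concaveOn _ ⟨zero_le, le_rfl⟩ 0 ⟨le_rfl, zero_le⟩ 2⁻¹
    (ENNReal.inv_le_one.mpr one_le_two)
  simp only [hU.map_zero, mul_zero, add_zero] at hconc
  intro htop
  rw [htop, mul_top (ENNReal.inv_ne_zero.mpr ofNat_ne_top)] at hconc
  exact hU.finite_of_lt _ hhalf (top_le_iff.mp hconc)

theorem apply_le_apply_inv (hU : IsUtility α U D) {x : ℝ≥0∞} (hx : x ≤ α⁻¹) : U x ≤ U α⁻¹ :=
  hU.monotoneOn ⟨zero_le, hx⟩ ⟨zero_le, le_rfl⟩ hx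

theorem apply_ne_top (hU : IsUtility α U D) (hα : α ≠ 0) {x : ℝ≥0∞} (hx : x ≤ α⁻¹) :
    U x ≠ ∞ :=
  ne_top_of_le_ne_top (hU.apply_inv_ne_top hα) (hU.apply_le_apply_inv hx)

theorem deriv_ne_top (hU : IsUtility α U D) (hα : α ≠ 0) {x : ℝ≥0∞} (hx : 0 < x)
    (hxα : x ≤ α⁻¹) : D x ≠ ∞ := by
  have hhalf : x / 2 < x :=
    ENNReal.half_lt_self hx.ne' (ne_top_of_le_ne_top (inv_ne_top.mpr hα) hxα)
  have hle : D x ≤ D (x / 2) :=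
    hU.deriv_antitoneOn ⟨zero_le, hhalf.le.trans hxα⟩ ⟨zero_le, hxα⟩ hhalf.le
  exact ne_top_of_le_ne_top
    (hU.deriv_finite _ (ENNReal.div_pos hx.ne' ofNat_ne_top) (hhalf.trans_le hxα)) hle

theorem exists_eq_add_deriv_mul (hU : IsUtility α U D) (hα : α ≠ 0) {x y : ℝ≥0∞} (hxy : x < y)
    (hy : y ≤ α⁻¹) : ∃ ξ ∈ Ioo x y, U y = U x + D ξ * (y - x) := by
  have hyα : y ≠ ∞ := ne_top_of_le_ne_top (inv_ne_top.mpr hα) hy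
  refine exists_eq_add_mul_sub hxy hyα
    (hU.continuousOn.mono (Icc_subset_Icc zero_le hy))
    (fun z hz => hU.apply_ne_top hα (hz.2.trans hy))
    (fun z hz => hU.deriv_ne_top hα (pos_of_gt hz.1) (hz.2.le.trans hy)) fun r hr => ?_
  have hr0 : 0 < r := toReal_nonneg.trans_lt hr.1
  exact hU.hasDerivAt r hr0 ((ofReal_lt_iff_lt_toReal hr0.le hyα).mpr hr.2 |>.trans_le hy)

theorem add_deriv_mul_sub_le (hU : IsUtility α U D) (hα : α ≠ 0) {x y : ℝ≥0∞} (hxy : x ≤ y)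
    (hy : y ≤ α⁻¹) : U x + D y * (y - x) ≤ U y := by
  rcases hxy.eq_or_lt with rfl | hxy
  · simp
  obtain ⟨ξ, hξ, hU_eq⟩ := hU.exists_eq_add_deriv_mul hα hxy hy
  rw [hU_eq]
  gcongr
  exact hU.deriv_antitoneOn ⟨zero_le, hξ.2.le.trans hy⟩ ⟨zero_le, hy⟩ hξ.2.le

theorem le_add_deriv_mul_sub (hU : IsUtility α U D) (hα : α ≠ 0) {x y : ℝ≥0∞} (hxy : x ≤ y)
    (hy : y ≤ α⁻¹) : U y ≤ U x + D x * (y - x) := by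
  rcases hxy.eq_or_lt with rfl | hxy
  · simp
  obtain ⟨ξ, hξ, hU_eq⟩ := hU.exists_eq_add_deriv_mul hα hxy hy
  rw [hU_eq]
  gcongr
  exact hU.deriv_antitoneOn ⟨zero_le, (hxy.trans_le hy).le⟩ ⟨zero_le, hξ.2.le.trans hy⟩ hξ.1.le

theorem deriv_mul_le (hU : IsUtility α U D) (hα : α ≠ 0) {x : ℝ≥0∞} (hx : x ≤ α⁻¹) :
    D x * x ≤ U x := by
  simpa [hU.map_zero] using hU.add_deriv_mul_sub_le hα (zero_le : 0 ≤ x) hx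

theorem add_deriv_mul_le_add_deriv_mul (hU : IsUtility α U D) (hα : α ≠ 0) {a b : ℝ≥0∞}
    (ha : a ≤ α⁻¹) (hb : b ≤ α⁻¹) : U a + D b * b ≤ U b + D b * a := by
  rcases le_total a b with hab | hba
  · calc U a + D b * b = U a + D b * (b - a) + D b * a := by
          rw [add_assoc, ← mul_add, tsub_add_cancel_of_le hab]
      _ ≤ U b + D b * a := by gcongr; exact hU.add_deriv_mul_sub_le hα hab hb
  · calc U a + D b * b ≤ U b + D b * (a - b) + D b * b := by
          gcongr; exact hU.le_add_deriv_mul_sub hα hba ha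
      _ = U b + D b * a := by rw [add_assoc, ← mul_add, tsub_add_cancel_of_le hba]

/-- The gradient inequality at `x = (1 - t) a + t b`, after cancelling `D x * ((1 - t) a)`. -/
theorem add_mul_deriv_mul_le (hU : IsUtility α U D) (hα : α ≠ 0) {a b t : ℝ≥0∞}
    (ha : a ≤ α⁻¹) (hb : b ≤ α⁻¹) (ht : t ≤ 1) :
    U a + t * (D ((1 - t) * a + t * b) * b) ≤
      U ((1 - t) * a + t * b) + t * (D ((1 - t) * a + t * b) * a) := by
  set x := (1 - t) * a + t * b with hx
  have hxα : x ≤ α⁻¹ := one_sub_mul_add_mul_le ha hb ht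
  -- finite even if `D 0 = ∞`, since `x = 0` forces `(1 - t) a = 0`
  have hK : D x * ((1 - t) * a) ≠ ∞ := by
    rcases (zero_le : 0 ≤ x).eq_or_lt with hx0 | hx0
    · rw [le_antisymm ((le_self_add : (1 - t) * a ≤ x).trans hx0.ge) zero_le, mul_zero]
      exact zero_ne_top
    · exact mul_ne_top (hU.deriv_ne_top hα hx0 hxα)
        (ne_top_of_le_ne_top (inv_ne_top.mpr hα) (le_self_add.trans hxα))
  refine (ENNReal.add_le_add_iff_left hK).mp ?_
  calc D x * ((1 - t) * a) + (U a + t * (D x * b)) = U a + D x * x := by rw [hx]; ring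
    _ ≤ U x + D x * a := hU.add_deriv_mul_le_add_deriv_mul hα ha hxα
    _ = U x + D x * (((1 - t) + t) * a) := by rw [tsub_add_cancel_of_le ht, one_mul]
    _ = D x * ((1 - t) * a) + (U x + t * (D x * a)) := by ring

theorem deriv_mul_le_two_mul (hU : IsUtility α U D) (hα : α ≠ 0) {x y : ℝ≥0∞}
    (hxy : 2⁻¹ * x ≤ y) (hy : y ≤ α⁻¹) : D y * x ≤ 2 * U α⁻¹ := by
  have hhalf : 2⁻¹ * x ≤ α⁻¹ := hxy.trans hy
  calc D y * x ≤ D (2⁻¹ * x) * x := by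
        gcongr; exact hU.deriv_antitoneOn ⟨zero_le, hhalf⟩ ⟨zero_le, hy⟩ hxy
    _ = 2 * (D (2⁻¹ * x) * (2⁻¹ * x)) := by
        rw [mul_left_comm, ← mul_assoc 2, ENNReal.mul_inv_cancel two_ne_zero ofNat_ne_top, one_mul]
    _ ≤ 2 * U α⁻¹ := by
        gcongr; exact (hU.deriv_mul_le hα hhalf).trans (hU.apply_le_apply_inv hhalf)

theorem tendsto_deriv_one_sub_mul_add_mul (hU : IsUtility α U D) (hα : α ≠ 0) {ι : Type*}
    {l : Filter ι} {t : ι → ℝ≥0∞} (ht : Tendsto t l (𝓝 0)) (ht1 : ∀ i, t i ≤ 1) {a b : ℝ≥0∞}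
    (ha : a ≤ α⁻¹) (hb : b ≤ α⁻¹) :
    Tendsto (fun i => D ((1 - t i) * a + t i * b)) l (𝓝 (D a)) :=
  (hU.deriv_continuousOn a ⟨zero_le, ha⟩).tendsto.comp <| tendsto_nhdsWithin_iff.mpr
    ⟨tendsto_one_sub_mul_add_mul ht a (ne_top_of_le_ne_top (inv_ne_top.mpr hα) hb),
      Eventually.of_forall fun i => ⟨zero_le, one_sub_mul_add_mul_le ha hb (ht1 i)⟩⟩

variable {Ω : Type*} [MeasurableSpace Ω] {Q : Measure Ω} [IsFiniteMeasure Q] {ε εs : Ω → ℝ≥0∞}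

theorem lintegral_ne_top (hU : IsUtility α U D) (hα : α ≠ 0) (hε : ∀ ω, ε ω ≤ α⁻¹) :
    ∫⁻ ω, U (ε ω) ∂Q ≠ ∞ := by
  refine ne_top_of_le_ne_top ?_ (lintegral_mono fun ω => hU.apply_le_apply_inv (hε ω))
  rw [lintegral_const]
  exact mul_ne_top (hU.apply_inv_ne_top hα) (measure_ne_top Q univ)

theorem lintegral_le_of_lintegral_deriv_mul_le (hU : IsUtility α U D) (hα : α ≠ 0)
    (hεm : Measurable ε) (hε : ∀ ω, ε ω ≤ α⁻¹) (hεsm : Measurable εs) (hεs : ∀ ω, εs ω ≤ α⁻¹)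
    (h : ∫⁻ ω, D (εs ω) * ε ω ∂Q ≤ ∫⁻ ω, D (εs ω) * εs ω ∂Q) :
    ∫⁻ ω, U (ε ω) ∂Q ≤ ∫⁻ ω, U (εs ω) ∂Q := by
  have hfin : ∫⁻ ω, D (εs ω) * εs ω ∂Q ≠ ∞ :=
    ne_top_of_le_ne_top (hU.lintegral_ne_top (Q := Q) hα hεs)
      (lintegral_mono fun ω => hU.deriv_mul_le hα (hεs ω))
  refine (ENNReal.add_le_add_iff_right hfin).mp ?_
  calc ∫⁻ ω, U (ε ω) ∂Q + ∫⁻ ω, D (εs ω) * εs ω ∂Q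
      = ∫⁻ ω, U (ε ω) + D (εs ω) * εs ω ∂Q :=
        (lintegral_add_left (hU.continuousOn.measurable_comp hεm fun ω => ⟨zero_le, hε ω⟩) _).symm
    _ ≤ ∫⁻ ω, U (εs ω) + D (εs ω) * ε ω ∂Q :=
        lintegral_mono fun ω => hU.add_deriv_mul_le_add_deriv_mul hα (hε ω) (hεs ω)
    _ = ∫⁻ ω, U (εs ω) ∂Q + ∫⁻ ω, D (εs ω) * ε ω ∂Q :=
        lintegral_add_left (hU.continuousOn.measurable_comp hεsm fun ω => ⟨zero_le, hεs ω⟩) _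
    _ ≤ ∫⁻ ω, U (εs ω) ∂Q + ∫⁻ ω, D (εs ω) * εs ω ∂Q := by gcongr

theorem lintegral_deriv_mul_le_of_lintegral_le (hU : IsUtility α U D) (hα : α ≠ 0)
    (hεm : Measurable ε) (hε : ∀ ω, ε ω ≤ α⁻¹) (hεsm : Measurable εs) (hεs : ∀ ω, εs ω ≤ α⁻¹)
    {t : ℝ≥0∞} (ht0 : t ≠ 0) (ht1 : t ≤ 1)
    (h : ∫⁻ ω, U ((1 - t) * εs ω + t * ε ω) ∂Q ≤ ∫⁻ ω, U (εs ω) ∂Q) :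
    ∫⁻ ω, D ((1 - t) * εs ω + t * ε ω) * ε ω ∂Q ≤
      ∫⁻ ω, D ((1 - t) * εs ω + t * ε ω) * εs ω ∂Q := by
  have htop : t ≠ ∞ := ne_top_of_le_ne_top one_ne_top ht1
  have hεtm : Measurable fun ω => U ((1 - t) * εs ω + t * ε ω) :=
    hU.continuousOn.measurable_comp ((hεsm.const_mul _).add (hεm.const_mul _))
      fun ω => ⟨zero_le, one_sub_mul_add_mul_le (hεs ω) (hε ω) ht1⟩
  refine (ENNReal.mul_le_mul_iff_right ht0 htop).mp <|
    (ENNReal.add_le_add_iff_left (hU.lintegral_ne_top (Q := Q) hα hεs)).mp ?_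
  calc ∫⁻ ω, U (εs ω) ∂Q + t * ∫⁻ ω, D ((1 - t) * εs ω + t * ε ω) * ε ω ∂Q
      = ∫⁻ ω, U (εs ω) + t * (D ((1 - t) * εs ω + t * ε ω) * ε ω) ∂Q := by
        rw [lintegral_add_left (hU.continuousOn.measurable_comp hεsm fun ω => ⟨zero_le, hεs ω⟩),
          lintegral_const_mul' _ _ htop]
    _ ≤ ∫⁻ ω, U ((1 - t) * εs ω + t * ε ω) + t * (D ((1 - t) * εs ω + t * ε ω) * εs ω) ∂Q :=
        lintegral_mono fun ω => hU.add_mul_deriv_mul_le hα (hεs ω) (hε ω) ht1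
    _ = ∫⁻ ω, U ((1 - t) * εs ω + t * ε ω) ∂Q +
          t * ∫⁻ ω, D ((1 - t) * εs ω + t * ε ω) * εs ω ∂Q := by
        rw [lintegral_add_left hεtm, lintegral_const_mul' _ _ htop]
    _ ≤ ∫⁻ ω, U (εs ω) ∂Q + t * ∫⁻ ω, D ((1 - t) * εs ω + t * ε ω) * εs ω ∂Q := by gcongr

theorem lintegral_deriv_mul_le_of_forall_pos (hU : IsUtility α U D) (hα : α ≠ 0)
    (hεm : Measurable ε) (hε : ∀ ω, ε ω ≤ α⁻¹) (hεsm : Measurable εs) (hεs : ∀ ω, εs ω ≤ α⁻¹)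
    (h : ∀ t : ℝ≥0∞, t ≠ 0 → t ≤ 2⁻¹ →
      ∫⁻ ω, D ((1 - t) * εs ω + t * ε ω) * ε ω ∂Q ≤
        ∫⁻ ω, D ((1 - t) * εs ω + t * ε ω) * εs ω ∂Q) :
    ∫⁻ ω, D (εs ω) * ε ω ∂Q ≤ ∫⁻ ω, D (εs ω) * εs ω ∂Q := by
  set t : ℕ → ℝ≥0∞ := fun n => 2⁻¹ ^ (n + 1)
  set εt : ℕ → Ω → ℝ≥0∞ := fun n ω => (1 - t n) * εs ω + t n * ε ω
  have ht_le : ∀ n, t n ≤ 2⁻¹ := fun n =>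
    pow_le_of_le_one zero_le (ENNReal.inv_le_one.mpr one_le_two) n.succ_ne_zero
  have ht1 : ∀ n, t n ≤ 1 := fun n => (ht_le n).trans (ENNReal.inv_le_one.mpr one_le_two)
  have ht : Tendsto t atTop (𝓝 0) :=
    (ENNReal.tendsto_pow_atTop_nhds_zero_of_lt_one (by norm_num)).comp (tendsto_add_atTop_nat 1)
  have hεtα : ∀ n ω, εt n ω ≤ α⁻¹ := fun n ω => one_sub_mul_add_mul_le (hεs ω) (hε ω) (ht1 n)
  have hDm : ∀ n, Measurable fun ω => D (εt n ω) := fun n =>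
    hU.deriv_continuousOn.measurable_comp ((hεsm.const_mul _).add (hεm.const_mul _))
      fun ω => ⟨zero_le, hεtα n ω⟩
  have hD : ∀ ω, Tendsto (fun n => D (εt n ω)) atTop (𝓝 (D (εs ω))) := fun ω =>
    hU.tendsto_deriv_one_sub_mul_add_mul hα ht ht1 (hεs ω) (hε ω)
  have hε_top : ∀ ω, ε ω ≠ ∞ := fun ω => ne_top_of_le_ne_top (inv_ne_top.mpr hα) (hε ω)
  have hεs_top : ∀ ω, εs ω ≠ ∞ := fun ω => ne_top_of_le_ne_top (inv_ne_top.mpr hα) (hεs ω)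
  have hfatou : ∫⁻ ω, D (εs ω) * ε ω ∂Q ≤ liminf (fun n => ∫⁻ ω, D (εt n ω) * ε ω ∂Q) atTop :=
    calc ∫⁻ ω, D (εs ω) * ε ω ∂Q = ∫⁻ ω, liminf (fun n => D (εt n ω) * ε ω) atTop ∂Q :=
          lintegral_congr fun ω =>
            (ENNReal.Tendsto.mul_const (hD ω) (Or.inr (hε_top ω))).liminf_eq.symm
      _ ≤ _ := lintegral_liminf_le fun n => (hDm n).mul hεm
  have hdom : Tendsto (fun n => ∫⁻ ω, D (εt n ω) * εs ω ∂Q) atTop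
      (𝓝 (∫⁻ ω, D (εs ω) * εs ω ∂Q)) := by
    refine tendsto_lintegral_of_dominated_convergence (fun _ => 2 * U α⁻¹)
      (fun n => (hDm n).mul hεsm) (fun n => ae_of_all _ fun ω =>
        hU.deriv_mul_le_two_mul hα (inv_two_mul_le_one_sub_mul_add_mul (ht_le n)) (hεtα n ω)) ?_
      (ae_of_all _ fun ω => ENNReal.Tendsto.mul_const (hD ω) (Or.inr (hεs_top ω)))
    rw [lintegral_const]
    exact mul_ne_top (mul_ne_top ofNat_ne_top (hU.apply_inv_ne_top hα)) (measure_ne_top Q univ)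
  calc ∫⁻ ω, D (εs ω) * ε ω ∂Q ≤ liminf (fun n => ∫⁻ ω, D (εt n ω) * ε ω ∂Q) atTop := hfatou
    _ ≤ liminf (fun n => ∫⁻ ω, D (εt n ω) * εs ω ∂Q) atTop :=
        liminf_le_liminf (Eventually.of_forall fun n =>
          h (t n) (pow_ne_zero _ (ENNReal.inv_ne_zero.mpr ofNat_ne_top)) (ht_le n))
    _ = ∫⁻ ω, D (εs ω) * εs ω ∂Q := hdom.liminf_eq

end IsUtility

theorem first_order_condition_iff_optimal_general
    {Ω : Type*} [MeasurableSpace Ω]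
    (H : Set (Measure Ω))
    (Q : Measure Ω) [IsProbabilityMeasure Q]
    (α : ℝ≥0∞) (hα : 0 < α)
    (U D : ℝ≥0∞ → ℝ≥0∞) (hU : IsUtility α U D)
    (εs : Ω → ℝ≥0∞) (hεsm : Measurable εs) (hεsb : ∀ ω, εs ω ≤ α⁻¹)
    (hεsval : ∀ P ∈ H, ∫⁻ ω, εs ω ∂P ≤ 1) :
    (∀ ε : Ω → ℝ≥0∞, Measurable ε → (∀ ω, ε ω ≤ α⁻¹) →
        (∀ P ∈ H, ∫⁻ ω, ε ω ∂P ≤ 1) →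
        ∫⁻ ω, U (ε ω) ∂Q ≤ ∫⁻ ω, U (εs ω) ∂Q)
      ↔
    (∀ ε : Ω → ℝ≥0∞, Measurable ε → (∀ ω, ε ω ≤ α⁻¹) →
        (∀ P ∈ H, ∫⁻ ω, ε ω ∂P ≤ 1) →
        ∫⁻ ω, D (εs ω) * ε ω ∂Q ≤ ∫⁻ ω, D (εs ω) * εs ω ∂Q) := by
  refine ⟨fun hopt ε hεm hε hεH => ?_, fun hfoc ε hεm hε hεH =>
    hU.lintegral_le_of_lintegral_deriv_mul_le hα.ne' hεm hε hεsm hεsb (hfoc ε hεm hε hεH)⟩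
  refine hU.lintegral_deriv_mul_le_of_forall_pos hα.ne' hεm hε hεsm hεsb fun t ht0 ht2 => ?_
  have ht1 : t ≤ 1 := ht2.trans (ENNReal.inv_le_one.mpr one_le_two)
  exact hU.lintegral_deriv_mul_le_of_lintegral_le hα.ne' hεm hε hεsm hεsb ht0 ht1 <|
    hopt _ ((hεsm.const_mul _).add (hεm.const_mul _))
      (fun ω => one_sub_mul_add_mul_le (hεsb ω) (hε ω) ht1)
      fun P hP => lintegral_one_sub_mul_add_mul_le_one hεsm ht1 (hεsval P hP) (hεH P hP)

/-- First-order conditions for expected-utility optimality (Lemma `lem:FOC`):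
for `α > 0` and `ε*` a valid level-`α` continuous test for `H`, the following
are equivalent: (1) `E_Q[U(ε)] − E_Q[U(ε*)] ≤ 0` for all valid level-`α`
continuous tests `ε`; (2) `E_Q[U'(ε*)·(ε − ε*)] ≤ 0` for all valid level-`α`
continuous tests `ε` (stated as `E_Q[U'(ε*)·ε] ≤ E_Q[U'(ε*)·ε*]`, where in
`ℝ≥0∞` the product `0·∞` is `0`). -/
theorem first_order_condition_iff_optimal
    {Ω : Type*} [MeasurableSpace Ω]
    (H : Set (Measure Ω)) (hH : ∀ P ∈ H, IsProbabilityMeasure P)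
    (Q : Measure Ω) [IsProbabilityMeasure Q]
    (α : ℝ≥0∞) (hα : 0 < α)
    (U D : ℝ≥0∞ → ℝ≥0∞) (hU : IsUtility α U D)
    (εs : Ω → ℝ≥0∞) (hεsm : Measurable εs) (hεsb : ∀ ω, εs ω ≤ α⁻¹)
    (hεsval : ∀ P ∈ H, ∫⁻ ω, εs ω ∂P ≤ 1) :
    (∀ ε : Ω → ℝ≥0∞, Measurable ε → (∀ ω, ε ω ≤ α⁻¹) →
        (∀ P ∈ H, ∫⁻ ω, ε ω ∂P ≤ 1) →
        ∫⁻ ω, U (ε ω) ∂Q ≤ ∫⁻ ω, U (εs ω) ∂Q)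
      ↔
    (∀ ε : Ω → ℝ≥0∞, Measurable ε → (∀ ω, ε ω ≤ α⁻¹) →
        (∀ P ∈ H, ∫⁻ ω, ε ω ∂P ≤ 1) →
        ∫⁻ ω, D (εs ω) * ε ω ∂Q ≤ ∫⁻ ω, D (εs ω) * εs ω ∂Q) :=
  first_order_condition_iff_optimal_general H Q α hα U D hU εs hεsm hεsb hεsval
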